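/- The distillable work of a thermal channel is zero: if Ω is a thermal channel at inverse temperature β for Hamiltonian H, then W(Ω, H) = max_ρ [F(Ω(ρ)) − F(ρ)] = 0. -/

import Mathlib

open Matrix BigOperators Kronecker Filter
open scoped ComplexOrder
noncomputable section

/-- A density matrix: positive semidefinite with unit trace. -/
def IsDensityMatrix {n : Type*} [Fintype n] (ρ : Matrix n n ℂ) : Prop :=
  ρ.PosSemidef ∧ ρ.trace = 1

/-- Von Neumann entropy, defined through the eigenvalues of a Hermitian matrix. -/
def vnEntropy {n : Type*} [Fintype n] [DecidableEq n] (ρ : Matrix n n ℂ) : ℝ :=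
  if h : ρ.IsHermitian then -∑ i, (h.eigenvalues i) * Real.log (h.eigenvalues i) else 0

/-- Functional calculus: logarithm of a Hermitian matrix (0 otherwise). -/
def hermLog {n : Type*} [Fintype n] [DecidableEq n] (A : Matrix n n ℂ) : Matrix n n ℂ :=
  if h : A.IsHermitian then
    (h.eigenvectorUnitary : Matrix n n ℂ) *
      Matrix.diagonal (fun i => (Real.log (h.eigenvalues i) : ℂ)) *
      (star (h.eigenvectorUnitary : Matrix n n ℂ))
  else 0

/-- Functional calculus: exponential of a Hermitian matrix (0 otherwise). -/
def hermExp {n : Type*} [Fintype n] [DecidableEq n] (A : Matrix n n ℂ) : Matrix n n ℂ :=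
  if h : A.IsHermitian then
    (h.eigenvectorUnitary : Matrix n n ℂ) *
      Matrix.diagonal (fun i => (Real.exp (h.eigenvalues i) : ℂ)) *
      (star (h.eigenvectorUnitary : Matrix n n ℂ))
  else 0

/-- Quantum relative entropy D(ρ‖σ) = Tr(ρ log ρ) - Tr(ρ log σ). -/
def relEntropy {n : Type*} [Fintype n] [DecidableEq n] (ρ σ : Matrix n n ℂ) : ℝ :=
  ((ρ * hermLog ρ).trace - (ρ * hermLog σ).trace).re

/-- Gibbs (thermal) state at inverse temperature β. -/
def gibbs {n : Type*} [Fintype n] [DecidableEq n] (β : ℝ) (Hm : Matrix n n ℂ) : Matrix n n ℂ :=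
  (hermExp ((-β : ℂ) • Hm)).trace⁻¹ • hermExp ((-β : ℂ) • Hm)

/-- Choi matrix of a map on matrices. -/
def choiMatrix {n m : Type*} [Fintype n] [DecidableEq n] [Fintype m]
    (Φ : Matrix n n ℂ → Matrix m m ℂ) : Matrix (n × m) (n × m) ℂ :=
  fun p q => Φ (Matrix.single p.1 q.1 1) p.2 q.2

/-- A quantum channel: linear, completely positive (PSD Choi matrix), trace preserving. -/
def IsCPTP {n m : Type*} [Fintype n] [DecidableEq n] [Fintype m]
    (Φ : Matrix n n ℂ → Matrix m m ℂ) : Prop :=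
  (∀ (a : ℂ) (A B : Matrix n n ℂ), Φ (a • A + B) = a • Φ A + Φ B) ∧
  (choiMatrix Φ).PosSemidef ∧ (∀ A : Matrix n n ℂ, (Φ A).trace = A.trace)

/-- Tensor product of two channels, acting on bipartite matrices. -/
def tensorChan {n m : Type*} [Fintype n] [DecidableEq n] [Fintype m] [DecidableEq m]
    (Φ₁ : Matrix n n ℂ → Matrix n n ℂ) (Φ₂ : Matrix m m ℂ → Matrix m m ℂ)
    (A : Matrix (n × m) (n × m) ℂ) : Matrix (n × m) (n × m) ℂ :=
  fun p q => ∑ a, ∑ b, ∑ c, ∑ d, A (a, c) (b, d) *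
    (Φ₁ (Matrix.single a b 1)) p.1 q.1 * (Φ₂ (Matrix.single c d 1)) p.2 q.2

/-- Partial trace over the second factor. -/
def ptrace₂ {n m : Type*} [Fintype m] (ρ : Matrix (n × m) (n × m) ℂ) : Matrix n n ℂ :=
  fun i j => ∑ k, ρ (i, k) (j, k)

/-- Partial trace over the first factor. -/
def ptrace₁ {n m : Type*} [Fintype n] (ρ : Matrix (n × m) (n × m) ℂ) : Matrix m m ℂ :=
  fun k l => ∑ i, ρ (i, k) (i, l)

/-- Free energy F(ρ) = Tr(ρH) - kT S(ρ). -/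
def freeEnergy {n : Type*} [Fintype n] [DecidableEq n]
    (ρ Hm : Matrix n n ℂ) (kT : ℝ) : ℝ :=
  ((ρ * Hm).trace).re - kT * vnEntropy ρ

/-- Free energy difference ΔF(ρ, Ω) = F(Ω(ρ)) - F(ρ). -/
def deltaF {n : Type*} [Fintype n] [DecidableEq n]
    (Φ : Matrix n n ℂ → Matrix n n ℂ) (ρ Hm : Matrix n n ℂ) (kT : ℝ) : ℝ :=
  freeEnergy (Φ ρ) Hm kT - freeEnergy ρ Hm kT

/-- Distillable work W(Ω,H) = sup over density matrices ρ of ΔF(ρ, Ω). -/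
def distillableWork {n : Type*} [Fintype n] [DecidableEq n]
    (Φ : Matrix n n ℂ → Matrix n n ℂ) (Hm : Matrix n n ℂ) (kT : ℝ) : ℝ :=
  sSup { w | ∃ ρ, IsDensityMatrix ρ ∧ w = deltaF Φ ρ Hm kT }

/-- Marginal of a multipartite state at site `i`. -/
def marginal {ι : Type*} [Fintype ι] [DecidableEq ι] {H : ι → Type*}
    [∀ i, Fintype (H i)] [∀ i, DecidableEq (H i)]
    (σ : Matrix (∀ j, H j) (∀ j, H j) ℂ) (i : ι) : Matrix (H i) (H i) ℂ :=
  fun a b => ∑ f : ∀ j, H j, if f i = a then σ f (Function.update f i b) else 0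

/-- Tensor product of a family of channels, acting on a multipartite matrix. -/
def tensorChanPi {ι : Type*} [Fintype ι] [DecidableEq ι] {H : ι → Type*}
    [∀ i, Fintype (H i)] [∀ i, DecidableEq (H i)]
    (Φ : ∀ i, Matrix (H i) (H i) ℂ → Matrix (H i) (H i) ℂ)
    (σ : Matrix (∀ j, H j) (∀ j, H j) ℂ) : Matrix (∀ j, H j) (∀ j, H j) ℂ :=
  fun f g => ∑ F : ∀ j, H j, ∑ G : ∀ j, H j,
    σ F G * ∏ j, (Φ j (Matrix.single (F j) (G j) 1)) (f j) (g j)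

/-- Embedding of a single-site operator into a multipartite system. -/
def embedAt {ι : Type*} [Fintype ι] [DecidableEq ι] {H : ι → Type*}
    [∀ i, Fintype (H i)] [∀ i, DecidableEq (H i)]
    (i : ι) (A : Matrix (H i) (H i) ℂ) : Matrix (∀ j, H j) (∀ j, H j) ℂ :=
  fun f g => A (f i) (g i) * ∏ j ∈ Finset.univ.erase i, (if f j = g j then 1 else 0)

/-- Binary entropy. -/
def binEntropy (p : ℝ) : ℝ := -p * Real.log p - (1 - p) * Real.log (1 - p)

/-! The Gibbs state `τ` of `H` is a fixed point of the thermal operation: `τ ⊗ τ_A` is the Gibbs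
state of the total Hamiltonian, with which `V` commutes, so `ΔF(τ) = 0`. For an arbitrary state
`ρ`, let `σ = V (ρ ⊗ τ_A) V†` with marginals `σ_S`, `σ_A`. Conservation of the total energy,
unitary invariance and additivity of the entropy, and `log τ_A = -β H_A - log Z_A` combine to
`β (F(ρ) - F(σ_S)) = D(σ ‖ σ_S ⊗ τ_A)`, which is nonnegative by Klein's inequality. So the
supremum defining the distillable work is attained at `τ` and equals `0`. -/

section Diagonalization

variable {m : Type*} [Fintype m] [DecidableEq m] {U : Matrix m m ℂ}

lemma isHermitian_conj_diagonal (U : Matrix m m ℂ) (d : m → ℝ) :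
    (U * diagonal (fun i => (d i : ℂ)) * star U).IsHermitian := by
  simpa [star_eq_conjTranspose, Matrix.mul_assoc] using
    isHermitian_mul_mul_conjTranspose U
      (isHermitian_diagonal_iff.mpr fun i => Complex.conj_ofReal (d i))

lemma trace_conj_diagonal (hU : U ∈ unitaryGroup m ℂ) (c : m → ℂ) :
    (U * diagonal c * star U).trace = ∑ i, c i := by
  rw [trace_mul_comm, ← Matrix.mul_assoc, Unitary.star_mul_self_of_mem hU, Matrix.one_mul,
    trace_diagonal]

lemma conj_diagonal_mul_conj_diagonal (hU : U ∈ unitaryGroup m ℂ) (c e : m → ℂ) :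
    U * diagonal c * star U * (U * diagonal e * star U) =
      U * diagonal (fun i => c i * e i) * star U := by
  rw [← diagonal_mul_diagonal]
  calc U * diagonal c * star U * (U * diagonal e * star U)
      = U * diagonal c * (star U * U) * diagonal e * star U := by noncomm_ring
    _ = _ := by rw [Unitary.star_mul_self_of_mem hU, Matrix.mul_one, Matrix.mul_assoc U]

lemma smul_conj_diagonal (z : ℂ) (U : Matrix m m ℂ) (c : m → ℂ) :
    z • (U * diagonal c * star U) = U * diagonal (fun i => z * c i) * star U := by
  change _ = U * diagonal (z • c) * star U
  rw [diagonal_smul, Matrix.mul_smul, Matrix.smul_mul]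

lemma conj_diagonal_add (U : Matrix m m ℂ) (c e : m → ℂ) :
    U * diagonal c * star U + U * diagonal e * star U =
      U * diagonal (fun i => c i + e i) * star U := by
  rw [← Matrix.add_mul, ← Matrix.mul_add, diagonal_add]

lemma one_eq_conj_diagonal (hU : U ∈ unitaryGroup m ℂ) :
    (1 : Matrix m m ℂ) = U * diagonal (fun _ => ((1 : ℝ) : ℂ)) * star U := by
  simp [Unitary.mul_star_self_of_mem hU]

lemma Matrix.IsHermitian.eq_conj_diagonal_eigenvalues {A : Matrix m m ℂ} (hA : A.IsHermitian) :
    A = hA.eigenvectorUnitary * diagonal (fun i => (hA.eigenvalues i : ℂ)) *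
      star (hA.eigenvectorUnitary : Matrix m m ℂ) :=
  hA.spectral_theorem

lemma eigenvalues_eq_of_conj_diagonal {A : Matrix m m ℂ} (hA : A.IsHermitian)
    (hU : U ∈ unitaryGroup m ℂ) {d : m → ℝ} (hAU : A = U * diagonal (fun i => (d i : ℂ)) * star U)
    {i j : m} (hij : (star (hA.eigenvectorUnitary : Matrix m m ℂ) * U) i j ≠ 0) :
    hA.eigenvalues i = d j := by
  set E := (hA.eigenvectorUnitary : Matrix m m ℂ)
  have hE : E ∈ unitaryGroup m ℂ := hA.eigenvectorUnitary.2
  have hAE : A = E * diagonal (fun i => (hA.eigenvalues i : ℂ)) * star E :=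
    hA.eq_conj_diagonal_eigenvalues
  have intertwine : diagonal (fun i => (hA.eigenvalues i : ℂ)) * (star E * U) =
      star E * U * diagonal (fun i => (d i : ℂ)) :=
    calc _ = star E * (E * diagonal (fun i => (hA.eigenvalues i : ℂ)) * star E) * U := by
          simp only [Matrix.mul_assoc, ← Matrix.mul_assoc (star E) E,
            Unitary.star_mul_self_of_mem hE, Matrix.one_mul]
      _ = star E * (U * diagonal (fun i => (d i : ℂ)) * star U) * U := by rw [← hAE, ← hAU]
      _ = _ := by
          simp only [Matrix.mul_assoc, Unitary.star_mul_self_of_mem hU, Matrix.mul_one]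
  have hentry := congrFun (congrFun intertwine i) j
  rw [diagonal_mul, mul_diagonal, mul_comm] at hentry
  exact_mod_cast mul_left_cancel₀ hij hentry

lemma conj_diagonal_comp_eigenvalues {A : Matrix m m ℂ} (hA : A.IsHermitian)
    (hU : U ∈ unitaryGroup m ℂ) {d : m → ℝ} (hAU : A = U * diagonal (fun i => (d i : ℂ)) * star U)
    (f : ℝ → ℝ) :
    (hA.eigenvectorUnitary : Matrix m m ℂ) * diagonal (fun i => (f (hA.eigenvalues i) : ℂ)) *
      star (hA.eigenvectorUnitary : Matrix m m ℂ) =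
    U * diagonal (fun i => (f (d i) : ℂ)) * star U := by
  set E := (hA.eigenvectorUnitary : Matrix m m ℂ)
  have hE : E ∈ unitaryGroup m ℂ := hA.eigenvectorUnitary.2
  have intertwine : diagonal (fun i => (f (hA.eigenvalues i) : ℂ)) * (star E * U) =
      star E * U * diagonal (fun i => (f (d i) : ℂ)) := by
    ext i j
    rw [diagonal_mul, mul_diagonal]
    rcases eq_or_ne ((star E * U) i j) 0 with h | h
    · simp [h]
    · rw [eigenvalues_eq_of_conj_diagonal hA hU hAU h, mul_comm]
  calc E * diagonal (fun i => (f (hA.eigenvalues i) : ℂ)) * star E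
      = E * (diagonal (fun i => (f (hA.eigenvalues i) : ℂ)) * (star E * U)) * star U := by
        simp only [Matrix.mul_assoc, Unitary.mul_star_self_of_mem hU, Matrix.mul_one]
    _ = (E * star E) * (U * diagonal (fun i => (f (d i) : ℂ)) * star U) := by
        rw [intertwine]; noncomm_ring
    _ = _ := by rw [Unitary.mul_star_self_of_mem hE, Matrix.one_mul]

variable {A : Matrix m m ℂ} {d : m → ℝ}

lemma hermLog_eq_conj_diagonal (hU : U ∈ unitaryGroup m ℂ)
    (hAU : A = U * diagonal (fun i => (d i : ℂ)) * star U) :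
    hermLog A = U * diagonal (fun i => (Real.log (d i) : ℂ)) * star U := by
  have hA : A.IsHermitian := hAU ▸ isHermitian_conj_diagonal U d
  rw [hermLog, dif_pos hA, conj_diagonal_comp_eigenvalues hA hU hAU]

lemma hermExp_eq_conj_diagonal (hU : U ∈ unitaryGroup m ℂ)
    (hAU : A = U * diagonal (fun i => (d i : ℂ)) * star U) :
    hermExp A = U * diagonal (fun i => (Real.exp (d i) : ℂ)) * star U := by
  have hA : A.IsHermitian := hAU ▸ isHermitian_conj_diagonal U d
  rw [hermExp, dif_pos hA, conj_diagonal_comp_eigenvalues hA hU hAU]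

lemma vnEntropy_eq_conj_diagonal (hU : U ∈ unitaryGroup m ℂ)
    (hAU : A = U * diagonal (fun i => (d i : ℂ)) * star U) :
    vnEntropy A = -∑ i, d i * Real.log (d i) := by
  have hA : A.IsHermitian := hAU ▸ isHermitian_conj_diagonal U d
  have htrace := congrArg trace
    (conj_diagonal_comp_eigenvalues hA hU hAU fun x => x * Real.log x)
  rw [trace_conj_diagonal hA.eigenvectorUnitary.2, trace_conj_diagonal hU] at htrace
  rw [vnEntropy, dif_pos hA]
  exact_mod_cast congrArg Neg.neg htrace

lemma sum_eq_one_of_conj_diagonal (hU : U ∈ unitaryGroup m ℂ)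
    (hAU : A = U * diagonal (fun i => (d i : ℂ)) * star U) (hA : A.trace = 1) :
    ∑ i, d i = 1 := by
  rw [hAU, trace_conj_diagonal hU] at hA
  exact_mod_cast hA

end Diagonalization

section PartialTrace

variable {n a : Type*}

lemma conj_diagonal_kronecker [Fintype n] [DecidableEq n] [Fintype a] [DecidableEq a]
    (E : Matrix n n ℂ) (F : Matrix a a ℂ) (c : n → ℂ) (e : a → ℂ) :
    (E * diagonal c * star E) ⊗ₖ (F * diagonal e * star F) =
      (E ⊗ₖ F) * diagonal (fun p : n × a => c p.1 * e p.2) * star (E ⊗ₖ F) := by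
  rw [mul_kronecker_mul, mul_kronecker_mul, diagonal_kronecker_diagonal, star_eq_conjTranspose,
    star_eq_conjTranspose, star_eq_conjTranspose, conjTranspose_kronecker]

lemma trace_ptrace₂ [Fintype n] [Fintype a] (σ : Matrix (n × a) (n × a) ℂ) :
    (ptrace₂ σ).trace = σ.trace := by
  simp [ptrace₂, trace, Fintype.sum_prod_type]

lemma trace_ptrace₁ [Fintype n] [Fintype a] (σ : Matrix (n × a) (n × a) ℂ) :
    (ptrace₁ σ).trace = σ.trace := by
  simp only [ptrace₁, trace, diag_apply, Fintype.sum_prod_type]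
  exact Finset.sum_comm

lemma ptrace₂_kronecker [Fintype a] (A : Matrix n n ℂ) (B : Matrix a a ℂ) :
    ptrace₂ (A ⊗ₖ B) = B.trace • A := by
  ext i j
  simp [ptrace₂, trace, Finset.mul_sum, mul_comm]

lemma ptrace₁_kronecker [Fintype n] (A : Matrix n n ℂ) (B : Matrix a a ℂ) :
    ptrace₁ (A ⊗ₖ B) = A.trace • B := by
  ext k l
  simp [ptrace₁, trace, Finset.sum_mul]

lemma trace_mul_kronecker_one [Fintype n] [Fintype a] [DecidableEq a]
    (σ : Matrix (n × a) (n × a) ℂ) (X : Matrix n n ℂ) :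
    (σ * (X ⊗ₖ (1 : Matrix a a ℂ))).trace = (ptrace₂ σ * X).trace := by
  simp only [trace, diag_apply, mul_apply, kroneckerMap_apply, one_apply, ptrace₂,
    Fintype.sum_prod_type, mul_ite, mul_one, mul_zero, Finset.sum_ite_eq', Finset.mem_univ,
    if_true, Finset.sum_mul]
  exact Finset.sum_congr rfl fun _ _ => Finset.sum_comm

lemma trace_mul_one_kronecker [Fintype n] [DecidableEq n] [Fintype a]
    (σ : Matrix (n × a) (n × a) ℂ) (X : Matrix a a ℂ) :
    (σ * ((1 : Matrix n n ℂ) ⊗ₖ X)).trace = (ptrace₁ σ * X).trace := by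
  simp only [trace, diag_apply, mul_apply, kroneckerMap_apply, one_apply, ptrace₁,
    Fintype.sum_prod_type, ite_mul, one_mul, zero_mul, mul_ite, mul_zero, Finset.sum_mul]
  rw [Finset.sum_comm]
  refine Finset.sum_congr rfl fun k _ => ?_
  rw [Finset.sum_comm]
  simp only [Finset.sum_ite_irrel, Finset.sum_const_zero, Finset.sum_ite_eq, Finset.mem_univ,
    if_true]
  exact Finset.sum_comm

lemma dotProduct_ptrace₂_mulVec [Fintype n] [Fintype a] [DecidableEq a]
    (σ : Matrix (n × a) (n × a) ℂ) (u : n → ℂ) :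
    star u ⬝ᵥ ptrace₂ σ *ᵥ u =
      ∑ k, star (fun p : n × a => if p.2 = k then u p.1 else 0) ⬝ᵥ
        σ *ᵥ (fun p : n × a => if p.2 = k then u p.1 else 0) := by
  simp only [dotProduct, mulVec, ptrace₂, Pi.star_apply, Fintype.sum_prod_type,
    apply_ite (star : ℂ → ℂ), star_zero, mul_ite, mul_zero, ite_mul, zero_mul,
    Finset.sum_ite_eq', Finset.mem_univ, if_true, Finset.mul_sum, Finset.sum_mul,
    Finset.sum_ite_irrel, Finset.sum_const_zero]
  conv_rhs => rw [Finset.sum_comm]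
  exact Finset.sum_congr rfl fun _ _ => Finset.sum_comm

lemma Matrix.PosSemidef.ptrace₂ [Fintype n] [Fintype a] {σ : Matrix (n × a) (n × a) ℂ}
    (hσ : σ.PosSemidef) :
    (ptrace₂ σ).PosSemidef := by
  classical
  refine .of_dotProduct_mulVec_nonneg ?_ fun u => ?_
  · ext i j
    simp only [conjTranspose_apply, _root_.ptrace₂, star_sum]
    exact Finset.sum_congr rfl fun k _ => hσ.1.apply (i, k) (j, k)
  · rw [dotProduct_ptrace₂_mulVec]
    exact Finset.sum_nonneg fun k _ => hσ.dotProduct_mulVec_nonneg _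

lemma Matrix.PosSemidef.mulVec_eq_zero_of_ptrace₂_kronecker_one [Fintype n] [Fintype a]
    [DecidableEq a] {σ : Matrix (n × a) (n × a) ℂ} (hσ : σ.PosSemidef) {v : n × a → ℂ}
    (hv : (_root_.ptrace₂ σ ⊗ₖ (1 : Matrix a a ℂ)) *ᵥ v = 0) :
    σ *ᵥ v = 0 := by
  set slice : a → n × a → ℂ := fun k p => if p.2 = k then v (p.1, k) else 0
  have hslice : ∀ k, σ *ᵥ slice k = 0 := by
    intro k
    have hker : _root_.ptrace₂ σ *ᵥ (fun i => v (i, k)) = 0 := by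
      funext i
      simpa [mulVec, dotProduct, kroneckerMap_apply, one_apply, Fintype.sum_prod_type] using
        congrFun hv (i, k)
    have hzero := (dotProduct_ptrace₂_mulVec σ fun i => v (i, k)).symm.trans
      (by rw [hker, dotProduct_zero])
    rw [Finset.sum_eq_zero_iff_of_nonneg fun _ _ => hσ.dotProduct_mulVec_nonneg _] at hzero
    exact hσ.dotProduct_mulVec_zero_iff _ |>.mp (hzero k (Finset.mem_univ k))
  have hv_sum : v = ∑ k, slice k := by
    funext p
    simp [slice, Finset.sum_apply]
  rw [hv_sum, mulVec_sum, Finset.sum_eq_zero fun k _ => hslice k]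

lemma kronecker_one_mulVec_eq_zero [Fintype n] [DecidableEq n] [Fintype a] [DecidableEq a]
    {X : Matrix n n ℂ} {Y : Matrix a a ℂ} (hY : Y.det ≠ 0)
    {v : n × a → ℂ} (hv : (X ⊗ₖ Y) *ᵥ v = 0) : (X ⊗ₖ (1 : Matrix a a ℂ)) *ᵥ v = 0 := by
  have hdet : ((1 : Matrix n n ℂ) ⊗ₖ Y).det ≠ 0 := by
    rw [det_kronecker, det_one, one_pow, one_mul]
    exact pow_ne_zero _ hY
  apply mulVec_injective_of_det_ne_zero hdet
  rw [mulVec_mulVec, ← mul_kronecker_mul, Matrix.one_mul, Matrix.mul_one, hv, mulVec_zero]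

end PartialTrace

section RelativeEntropy

variable {m : Type*} [Fintype m] [DecidableEq m]

lemma sub_le_mul_log_sub_log {p q : ℝ} (hp : 0 ≤ p) (hq : 0 < q) :
    p - q ≤ p * (Real.log p - Real.log q) := by
  rcases hp.eq_or_lt with rfl | hp
  · simp [hq.le]
  have hlog := Real.log_le_sub_one_of_pos (div_pos hq hp)
  rw [Real.log_div hq.ne' hp.ne', le_sub_iff_add_le] at hlog
  have := mul_le_mul_of_nonneg_left hlog hp.le
  rw [mul_add, mul_one, mul_div_cancel₀ _ hp.ne'] at this
  linarith

lemma sum_normSq_apply_of_mem_unitaryGroup {W : Matrix m m ℂ} (hW : W ∈ unitaryGroup m ℂ)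
    (i : m) : ∑ j, Complex.normSq (W i j) = 1 := by
  have h := congrFun (congrFun (mem_unitaryGroup_iff.mp hW) i) i
  rw [mul_apply, one_apply_eq] at h
  simp only [star_apply, RCLike.star_def, Complex.mul_conj] at h
  exact_mod_cast h

lemma trace_conj_diagonal_mul_conj_diagonal {E U : Matrix m m ℂ} (hE : E ∈ unitaryGroup m ℂ)
    (p q : m → ℂ) :
    (E * diagonal p * star E * (U * diagonal q * star U)).trace =
      ∑ i, ∑ j, p i * q j * Complex.normSq ((star E * U) i j) := by
  have hconj : E * diagonal p * star E * (U * diagonal q * star U) =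
      E * (diagonal p * (star E * U) * diagonal q * star (star E * U)) * star E := by
    rw [star_mul, star_star]
    simp only [Matrix.mul_assoc, Unitary.mul_star_self_of_mem hE, Matrix.mul_one]
  rw [hconj, trace_mul_comm, ← Matrix.mul_assoc, Unitary.star_mul_self_of_mem hE, Matrix.one_mul]
  set W := star E * U
  simp only [trace, diag_apply, mul_apply, diagonal_apply, ite_mul, zero_mul, mul_ite, mul_zero,
    Finset.sum_ite_eq, Finset.sum_ite_eq', Finset.mem_univ, if_true, star_apply, RCLike.star_def]
  refine Finset.sum_congr rfl fun i _ => Finset.sum_congr rfl fun j _ => ?_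
  rw [Complex.normSq_eq_conj_mul_self]
  ring

lemma re_trace_mul_hermLog_self {A : Matrix m m ℂ} (hA : A.IsHermitian) :
    (A * hermLog A).trace.re = -vnEntropy A := by
  have hE := hA.eigenvectorUnitary.2
  have hAE : A = (hA.eigenvectorUnitary : Matrix m m ℂ) *
      diagonal (fun i => (hA.eigenvalues i : ℂ)) * star (hA.eigenvectorUnitary : Matrix m m ℂ) :=
    hA.eq_conj_diagonal_eigenvalues
  rw [hermLog, dif_pos hA, vnEntropy, dif_pos hA, neg_neg]
  nth_rw 1 [hAE]
  rw [conj_diagonal_mul_conj_diagonal hE, trace_conj_diagonal hE]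
  simp only [Complex.re_sum, ← Complex.ofReal_mul, Complex.ofReal_re]

/-- The classical core of Klein's inequality, for a doubly stochastic `w`. -/
lemma sum_sum_mul_mul_log_sub_nonneg {ι : Type*} [Fintype ι] {w : ι → ι → ℝ} {p q : ι → ℝ}
    (hw : ∀ i j, 0 ≤ w i j) (hrow : ∀ i, ∑ j, w i j = 1) (hcol : ∀ j, ∑ i, w i j = 1)
    (hp : ∀ i, 0 ≤ p i) (hq : ∀ j, 0 ≤ q j) (hpq : ∑ i, p i = ∑ j, q j)
    (hsupp : ∀ i j, q j = 0 → w i j * p i = 0) :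
    0 ≤ ∑ i, ∑ j, w i j * (p i * (Real.log (p i) - Real.log (q j))) := by
  have hbalance : ∑ i, ∑ j, w i j * (p i - q j) = 0 := by
    simp only [mul_sub, Finset.sum_sub_distrib]
    rw [Finset.sum_comm (f := fun i j => w i j * q j)]
    simp only [← Finset.sum_mul, hrow, hcol, one_mul, hpq, sub_self]
  rw [← hbalance]
  refine Finset.sum_le_sum fun i _ => Finset.sum_le_sum fun j _ => ?_
  rcases (hq j).eq_or_lt with hqj | hqj
  · rw [← hqj, sub_zero, ← mul_assoc, hsupp i j hqj.symm, zero_mul]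
  · exact mul_le_mul_of_nonneg_left (sub_le_mul_log_sub_log (hp i) hqj) (hw i j)

/-- If `ker Q ⊆ ker P`, an eigenvector of `Q` with eigenvalue `0` is orthogonal to every
eigenvector of `P` with nonzero eigenvalue. -/
lemma ofReal_mul_star_mul_apply_eq_zero {P Q E U : Matrix m m ℂ} (hE : E ∈ unitaryGroup m ℂ)
    (hU : U ∈ unitaryGroup m ℂ) {p q : m → ℝ}
    (hPE : P = E * diagonal (fun i => (p i : ℂ)) * star E)
    (hQU : Q = U * diagonal (fun j => (q j : ℂ)) * star U)
    (hker : ∀ v, Q *ᵥ v = 0 → P *ᵥ v = 0) {i j : m} (hqj : q j = 0) :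
    (p i : ℂ) * (star E * U) i j = 0 := by
  have hQcol : Q *ᵥ (U *ᵥ Pi.single j 1) = 0 := by
    rw [mulVec_mulVec, hQU, Matrix.mul_assoc, Matrix.mul_assoc,
      Unitary.star_mul_self_of_mem hU, Matrix.mul_one, ← mulVec_mulVec]
    simp [hqj]
  have hPcol := hker _ hQcol
  rw [mulVec_mulVec] at hPcol
  have hdiag : diagonal (fun i => (p i : ℂ)) * (star E * U) = star E * (P * U) := by
    rw [hPE]
    simp only [← Matrix.mul_assoc, Unitary.star_mul_self_of_mem hE, Matrix.one_mul]
  have hentry := congrFun (congrFun hdiag i) j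
  rw [diagonal_mul] at hentry
  rw [hentry, mul_apply]
  refine Finset.sum_eq_zero fun k _ => ?_
  have hk := congrFun hPcol k
  simp only [mulVec_single_one, col_apply, Pi.zero_apply] at hk
  rw [hk, mul_zero]

/-- Klein's inequality. -/
lemma relEntropy_nonneg {P Q : Matrix m m ℂ} (hP : IsDensityMatrix P) (hQ : IsDensityMatrix Q)
    (hker : ∀ v, Q *ᵥ v = 0 → P *ᵥ v = 0) : 0 ≤ relEntropy P Q := by
  obtain ⟨hPpsd, hPtr⟩ := hP
  obtain ⟨hQpsd, hQtr⟩ := hQ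
  set E := (hPpsd.1.eigenvectorUnitary : Matrix m m ℂ)
  set U := (hQpsd.1.eigenvectorUnitary : Matrix m m ℂ)
  set p := hPpsd.1.eigenvalues
  set q := hQpsd.1.eigenvalues
  have hE : E ∈ unitaryGroup m ℂ := hPpsd.1.eigenvectorUnitary.2
  have hU : U ∈ unitaryGroup m ℂ := hQpsd.1.eigenvectorUnitary.2
  have hPE : P = E * diagonal (fun i => (p i : ℂ)) * star E :=
    hPpsd.1.eq_conj_diagonal_eigenvalues
  have hQU : Q = U * diagonal (fun j => (q j : ℂ)) * star U :=
    hQpsd.1.eq_conj_diagonal_eigenvalues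
  have hW : star E * U ∈ unitaryGroup m ℂ := mul_mem (Unitary.star_mem hE) hU
  set w : m → m → ℝ := fun i j => Complex.normSq ((star E * U) i j)
  have hrow : ∀ i, ∑ j, w i j = 1 := sum_normSq_apply_of_mem_unitaryGroup hW
  have hlogP : (P * hermLog P).trace.re = ∑ i, ∑ j, w i j * (p i * Real.log (p i)) := by
    rw [re_trace_mul_hermLog_self hPpsd.1, vnEntropy, dif_pos hPpsd.1, neg_neg]
    refine Finset.sum_congr rfl fun i _ => ?_
    rw [← Finset.sum_mul, hrow, one_mul]
  have hlogQ : (P * hermLog Q).trace.re = ∑ i, ∑ j, w i j * (p i * Real.log (q j)) := by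
    rw [hermLog, dif_pos hQpsd.1, hPE, trace_conj_diagonal_mul_conj_diagonal hE]
    simp only [Complex.re_sum, ← Complex.ofReal_mul, Complex.ofReal_re]
    exact Finset.sum_congr rfl fun i _ => Finset.sum_congr rfl fun j _ => by ring
  rw [relEntropy, Complex.sub_re, hlogP, hlogQ, ← Finset.sum_sub_distrib]
  simp only [← Finset.sum_sub_distrib, ← mul_sub]
  refine sum_sum_mul_mul_log_sub_nonneg (fun i j => Complex.normSq_nonneg _) hrow
    (fun j => by simpa [star_apply] using
      sum_normSq_apply_of_mem_unitaryGroup (Unitary.star_mem hW) j)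
    hPpsd.eigenvalues_nonneg hQpsd.eigenvalues_nonneg
    ((sum_eq_one_of_conj_diagonal hE hPE hPtr).trans
      (sum_eq_one_of_conj_diagonal hU hQU hQtr).symm)
    fun i j hqj => ?_
  obtain h | h := mul_eq_zero.mp (ofReal_mul_star_mul_apply_eq_zero hE hU hPE hQU hker hqj (i := i))
  · simp [Complex.ofReal_eq_zero.mp h]
  · simp [w, h]

end RelativeEntropy

section Gibbs

variable {m : Type*} [Fintype m] [DecidableEq m]

lemma posDef_conj_diagonal {U : Matrix m m ℂ} (hU : U ∈ unitaryGroup m ℂ) {d : m → ℝ}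
    (hd : ∀ i, 0 < d i) : (U * diagonal (fun i => (d i : ℂ)) * star U).PosDef := by
  have hUunit : IsUnit U := (Unitary.toUnits ⟨U, hU⟩).isUnit
  simpa [star_eq_conjTranspose] using
    (posDef_diagonal_iff.mpr fun i => Complex.zero_lt_real.mpr (hd i)).mul_mul_conjTranspose_same
      (vecMul_injective_of_isUnit hUunit)

lemma gibbs_eq_conj_diagonal (β : ℝ) {H U : Matrix m m ℂ} (hU : U ∈ unitaryGroup m ℂ) {d : m → ℝ}
    (hHU : H = U * diagonal (fun i => (d i : ℂ)) * star U) :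
    gibbs β H = U * diagonal
      (fun i => ((Real.exp (-β * d i) / ∑ j, Real.exp (-β * d j) : ℝ) : ℂ)) * star U := by
  have hexp : hermExp ((-β : ℂ) • H) =
      U * diagonal (fun i => (Real.exp (-β * d i) : ℂ)) * star U := by
    refine hermExp_eq_conj_diagonal hU ?_
    rw [hHU, smul_conj_diagonal]
    push_cast
    rfl
  rw [gibbs, hexp, trace_conj_diagonal hU, smul_conj_diagonal]
  push_cast
  simp only [div_eq_inv_mul]

variable [Nonempty m] {H : Matrix m m ℂ}

lemma posDef_gibbs (β : ℝ) (hH : H.IsHermitian) : (gibbs β H).PosDef := by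
  rw [gibbs_eq_conj_diagonal β hH.eigenvectorUnitary.2 hH.eq_conj_diagonal_eigenvalues]
  exact posDef_conj_diagonal hH.eigenvectorUnitary.2 fun i =>
    div_pos (Real.exp_pos _) (Finset.sum_pos (fun j _ => Real.exp_pos _) Finset.univ_nonempty)

lemma isDensityMatrix_gibbs (β : ℝ) (hH : H.IsHermitian) : IsDensityMatrix (gibbs β H) := by
  refine ⟨(posDef_gibbs β hH).posSemidef, ?_⟩
  have hE := hH.eigenvectorUnitary.2
  have hHE : H = hH.eigenvectorUnitary * diagonal (fun i => (hH.eigenvalues i : ℂ)) *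
      star (hH.eigenvectorUnitary : Matrix m m ℂ) := hH.eq_conj_diagonal_eigenvalues
  have hZ : 0 < ∑ j, Real.exp (-β * hH.eigenvalues j) :=
    Finset.sum_pos (fun j _ => Real.exp_pos _) Finset.univ_nonempty
  rw [gibbs_eq_conj_diagonal β hE hHE, trace_conj_diagonal hE]
  exact_mod_cast (Finset.sum_div ..).symm.trans (div_self hZ.ne')

/-- The constant is `-log Z`, with `Z` the partition function. -/
lemma re_trace_mul_hermLog_gibbs (β : ℝ) (hH : H.IsHermitian) :
    ∃ c : ℝ, ∀ X : Matrix m m ℂ, X.trace = 1 →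
      (X * hermLog (gibbs β H)).trace.re = -β * (X * H).trace.re + c := by
  set E := (hH.eigenvectorUnitary : Matrix m m ℂ)
  have hE : E ∈ unitaryGroup m ℂ := hH.eigenvectorUnitary.2
  set d := hH.eigenvalues
  have hHE : H = E * diagonal (fun i => (d i : ℂ)) * star E := hH.eq_conj_diagonal_eigenvalues
  set Z := ∑ j, Real.exp (-β * d j)
  have hZ : 0 < Z := Finset.sum_pos (fun j _ => Real.exp_pos _) Finset.univ_nonempty
  have hlog : hermLog (gibbs β H) = (-β : ℂ) • H + ((-Real.log Z : ℝ) : ℂ) • 1 := by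
    rw [hermLog_eq_conj_diagonal hE (gibbs_eq_conj_diagonal β hE hHE), one_eq_conj_diagonal hE,
      hHE, smul_conj_diagonal, smul_conj_diagonal, conj_diagonal_add]
    refine congrArg (fun D => E * diagonal D * star E) (funext fun i => ?_)
    rw [Real.log_div (Real.exp_pos _).ne' hZ.ne', Real.log_exp]
    push_cast
    ring
  refine ⟨-Real.log Z, fun X hX => ?_⟩
  rw [hlog, Matrix.mul_add, trace_add, Matrix.mul_smul, Matrix.mul_smul, Matrix.mul_one,
    trace_smul, trace_smul, hX]
  simp

end Gibbs

section Conjugation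

variable {m : Type*} [Fintype m] [DecidableEq m] {V A : Matrix m m ℂ}

lemma conj_eq_conj_diagonal (hA : A.IsHermitian) :
    V * A * star V = V * hA.eigenvectorUnitary * diagonal (fun i => (hA.eigenvalues i : ℂ)) *
      star (V * hA.eigenvectorUnitary) := by
  conv_lhs => rw [hA.eq_conj_diagonal_eigenvalues]
  simp [star_mul, Matrix.mul_assoc]

lemma gibbs_conj (β : ℝ) (hV : V ∈ unitaryGroup m ℂ) (hA : A.IsHermitian) :
    gibbs β (V * A * star V) = V * gibbs β A * star V := by
  have hE := hA.eigenvectorUnitary.2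
  rw [gibbs_eq_conj_diagonal β (mul_mem hV hE) (conj_eq_conj_diagonal hA),
    gibbs_eq_conj_diagonal β hE hA.eq_conj_diagonal_eigenvalues, star_mul]
  simp only [Matrix.mul_assoc]

lemma vnEntropy_conj (hV : V ∈ unitaryGroup m ℂ) (hA : A.IsHermitian) :
    vnEntropy (V * A * star V) = vnEntropy A := by
  have hE := hA.eigenvectorUnitary.2
  rw [vnEntropy_eq_conj_diagonal (mul_mem hV hE) (conj_eq_conj_diagonal hA),
    vnEntropy_eq_conj_diagonal hE hA.eq_conj_diagonal_eigenvalues]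

end Conjugation

lemma sum_mul_log_mul {ι κ : Type*} [Fintype ι] [Fintype κ] (r : ι → ℝ) (t : κ → ℝ) :
    ∑ p : ι × κ, r p.1 * t p.2 * Real.log (r p.1 * t p.2) =
      (∑ j, t j) * ∑ i, r i * Real.log (r i) + (∑ i, r i) * ∑ j, t j * Real.log (t j) := by
  have hterm : ∀ i j, r i * t j * Real.log (r i * t j) =
      t j * (r i * Real.log (r i)) + r i * (t j * Real.log (t j)) := by
    intro i j
    rcases eq_or_ne (r i) 0 with hr | hr
    · simp [hr]
    rcases eq_or_ne (t j) 0 with ht | ht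
    · simp [ht]
    rw [Real.log_mul hr ht]
    ring
  simp only [Fintype.sum_prod_type, hterm, Finset.sum_add_distrib, Finset.sum_mul,
    Finset.mul_sum]
  rw [Finset.sum_comm (f := fun i j => r i * (t j * Real.log (t j))), add_comm]

section Kronecker

variable {n a : Type*} [Fintype n] [DecidableEq n] [Fintype a] [DecidableEq a]

lemma kronecker_eq_conj_diagonal {X : Matrix n n ℂ} {Y : Matrix a a ℂ} (hX : X.IsHermitian)
    (hY : Y.IsHermitian) :
    X ⊗ₖ Y = (hX.eigenvectorUnitary ⊗ₖ hY.eigenvectorUnitary : Matrix (n × a) (n × a) ℂ) *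
      diagonal (fun p => ((hX.eigenvalues p.1 * hY.eigenvalues p.2 : ℝ) : ℂ)) *
      star (hX.eigenvectorUnitary ⊗ₖ hY.eigenvectorUnitary : Matrix (n × a) (n × a) ℂ) := by
  conv_lhs => rw [hX.eq_conj_diagonal_eigenvalues, hY.eq_conj_diagonal_eigenvalues]
  rw [conj_diagonal_kronecker]
  push_cast
  rfl

lemma vnEntropy_kronecker {ρ : Matrix n n ℂ} {τ : Matrix a a ℂ} (hρ : ρ.IsHermitian)
    (hτ : τ.IsHermitian) (hρ1 : ρ.trace = 1) (hτ1 : τ.trace = 1) :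
    vnEntropy (ρ ⊗ₖ τ) = vnEntropy ρ + vnEntropy τ := by
  have hE := hρ.eigenvectorUnitary.2
  have hF := hτ.eigenvectorUnitary.2
  rw [vnEntropy_eq_conj_diagonal (kronecker_mem_unitary hE hF) (kronecker_eq_conj_diagonal hρ hτ),
    vnEntropy_eq_conj_diagonal hE hρ.eq_conj_diagonal_eigenvalues,
    vnEntropy_eq_conj_diagonal hF hτ.eq_conj_diagonal_eigenvalues, sum_mul_log_mul,
    sum_eq_one_of_conj_diagonal hE hρ.eq_conj_diagonal_eigenvalues hρ1,
    sum_eq_one_of_conj_diagonal hF hτ.eq_conj_diagonal_eigenvalues hτ1]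
  ring

lemma gibbs_kronecker (β : ℝ) {A : Matrix n n ℂ} {B : Matrix a a ℂ} (hA : A.IsHermitian)
    (hB : B.IsHermitian) :
    gibbs β A ⊗ₖ gibbs β B = gibbs β (A ⊗ₖ (1 : Matrix a a ℂ) + (1 : Matrix n n ℂ) ⊗ₖ B) := by
  set E := (hA.eigenvectorUnitary : Matrix n n ℂ)
  set F := (hB.eigenvectorUnitary : Matrix a a ℂ)
  have hE : E ∈ unitaryGroup n ℂ := hA.eigenvectorUnitary.2
  have hF : F ∈ unitaryGroup a ℂ := hB.eigenvectorUnitary.2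
  set d := hA.eigenvalues
  set e := hB.eigenvalues
  have hAE : A = E * diagonal (fun i => (d i : ℂ)) * star E := hA.eq_conj_diagonal_eigenvalues
  have hBF : B = F * diagonal (fun j => (e j : ℂ)) * star F := hB.eq_conj_diagonal_eigenvalues
  have hsum : A ⊗ₖ (1 : Matrix a a ℂ) + (1 : Matrix n n ℂ) ⊗ₖ B =
      E ⊗ₖ F * diagonal (fun p => ((d p.1 + e p.2 : ℝ) : ℂ)) * star (E ⊗ₖ F) := by
    conv_lhs => rw [hAE, hBF, one_eq_conj_diagonal hE, one_eq_conj_diagonal hF]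
    rw [conj_diagonal_kronecker, conj_diagonal_kronecker, conj_diagonal_add]
    push_cast
    simp only [mul_one, one_mul]
  rw [gibbs_eq_conj_diagonal β hE hAE, gibbs_eq_conj_diagonal β hF hBF, conj_diagonal_kronecker,
    gibbs_eq_conj_diagonal β (kronecker_mem_unitary hE hF) hsum]
  refine congrArg (fun D => E ⊗ₖ F * diagonal D * star (E ⊗ₖ F)) (funext fun p => ?_)
  simp only [mul_add, Real.exp_add, Fintype.sum_prod_type, ← Finset.sum_mul_sum]
  push_cast
  ring

/-- Since `hermLog` sends the eigenvalue `0` to `Real.log 0 = 0`, the logarithm of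
`ptrace₂ σ ⊗ Y` differs from `log (ptrace₂ σ) ⊗ 1 + 1 ⊗ log Y` on `ker (ptrace₂ σ) ⊗ ℂᵃ`;
`σ` annihilates that subspace. -/
lemma mul_hermLog_ptrace₂_kronecker {σ : Matrix (n × a) (n × a) ℂ} (hσ : σ.PosSemidef)
    {Y : Matrix a a ℂ} (hY : Y.PosDef) :
    σ * hermLog (ptrace₂ σ ⊗ₖ Y) =
      σ * (hermLog (ptrace₂ σ) ⊗ₖ (1 : Matrix a a ℂ) + (1 : Matrix n n ℂ) ⊗ₖ hermLog Y) := by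
  set X := ptrace₂ σ
  have hX : X.IsHermitian := hσ.ptrace₂.1
  set E := (hX.eigenvectorUnitary : Matrix n n ℂ)
  set F := (hY.1.eigenvectorUnitary : Matrix a a ℂ)
  have hE : E ∈ unitaryGroup n ℂ := hX.eigenvectorUnitary.2
  have hF : F ∈ unitaryGroup a ℂ := hY.1.eigenvectorUnitary.2
  set r := hX.eigenvalues
  set t := hY.1.eigenvalues
  have hXE : X = E * diagonal (fun i => (r i : ℂ)) * star E := hX.eq_conj_diagonal_eigenvalues
  set K := E ⊗ₖ F
  have hK : K ∈ unitaryGroup (n × a) ℂ := kronecker_mem_unitary hE hF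
  have hlog : hermLog (X ⊗ₖ Y) =
      K * diagonal (fun p => (Real.log (r p.1 * t p.2) : ℂ)) * star K :=
    hermLog_eq_conj_diagonal hK (kronecker_eq_conj_diagonal hX hY.1)
  have hsplit : hermLog X ⊗ₖ (1 : Matrix a a ℂ) + (1 : Matrix n n ℂ) ⊗ₖ hermLog Y =
      K * diagonal (fun p => (Real.log (r p.1) : ℂ) + (Real.log (t p.2) : ℂ)) * star K := by
    rw [hermLog_eq_conj_diagonal hE hXE,
      hermLog_eq_conj_diagonal hF hY.1.eq_conj_diagonal_eigenvalues,
      one_eq_conj_diagonal hE, one_eq_conj_diagonal hF, conj_diagonal_kronecker,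
      conj_diagonal_kronecker, conj_diagonal_add]
    simp only [Complex.ofReal_one, mul_one, one_mul]
    rfl
  have hker : ∀ i j, r j.1 = 0 → (σ * K) i j = 0 := by
    intro i j hr
    have hXK : (X ⊗ₖ (1 : Matrix a a ℂ)) *ᵥ (K *ᵥ Pi.single j 1) = 0 := by
      have hXE' : X * E = E * diagonal (fun i => (r i : ℂ)) := by
        rw [hXE, Matrix.mul_assoc, Unitary.star_mul_self_of_mem hE, Matrix.mul_one]
      rw [mulVec_mulVec, ← mul_kronecker_mul, Matrix.one_mul, hXE']
      funext p
      simp [kroneckerMap_apply, hr]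
    have := congrFun (hσ.mulVec_eq_zero_of_ptrace₂_kronecker_one hXK) i
    rwa [mulVec_mulVec, mulVec_single_one, col_apply] at this
  have hdiag : σ * K * diagonal (fun p => (Real.log (r p.1 * t p.2) : ℂ)) =
      σ * K * diagonal (fun p => (Real.log (r p.1) : ℂ) + (Real.log (t p.2) : ℂ)) := by
    ext i j
    rw [mul_diagonal, mul_diagonal]
    rcases eq_or_ne (r j.1) 0 with hr | hr
    · rw [hker i j hr, zero_mul, zero_mul]
    · rw [Real.log_mul hr (hY.eigenvalues_pos j.2).ne', Complex.ofReal_add]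
  rw [hlog, hsplit, ← Matrix.mul_assoc, ← Matrix.mul_assoc, ← Matrix.mul_assoc,
    ← Matrix.mul_assoc, hdiag]

lemma relEntropy_ptrace₂_kronecker {σ : Matrix (n × a) (n × a) ℂ} (hσ : σ.PosSemidef)
    {Y : Matrix a a ℂ} (hY : Y.PosDef) :
    relEntropy σ (ptrace₂ σ ⊗ₖ Y) =
      vnEntropy (ptrace₂ σ) - vnEntropy σ - (ptrace₁ σ * hermLog Y).trace.re := by
  rw [relEntropy, mul_hermLog_ptrace₂_kronecker hσ hY, Matrix.mul_add, trace_add,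
    trace_mul_kronecker_one, trace_mul_one_kronecker, Complex.sub_re, Complex.add_re,
    re_trace_mul_hermLog_self hσ.1, re_trace_mul_hermLog_self hσ.ptrace₂.1]
  ring

lemma relEntropy_ptrace₂_kronecker_nonneg {σ : Matrix (n × a) (n × a) ℂ}
    (hσ : IsDensityMatrix σ) {τ : Matrix a a ℂ} (hτ : IsDensityMatrix τ) (hτpos : τ.PosDef) :
    0 ≤ relEntropy σ (ptrace₂ σ ⊗ₖ τ) :=
  relEntropy_nonneg hσ
    ⟨hσ.1.ptrace₂.kronecker hτ.1, by rw [trace_kronecker, trace_ptrace₂, hσ.2, hτ.2, one_mul]⟩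
    fun _ hv => hσ.1.mulVec_eq_zero_of_ptrace₂_kronecker_one
      (kronecker_one_mulVec_eq_zero hτpos.det_pos.ne' hv)

end Kronecker

section ThermalOperation

variable {n a : Type*} [Fintype n] [DecidableEq n] [Fintype a] [DecidableEq a]

lemma trace_mul_kronecker_one_add_one_kronecker (σ : Matrix (n × a) (n × a) ℂ)
    (A : Matrix n n ℂ) (B : Matrix a a ℂ) :
    (σ * (A ⊗ₖ (1 : Matrix a a ℂ) + (1 : Matrix n n ℂ) ⊗ₖ B)).trace =
      (ptrace₂ σ * A).trace + (ptrace₁ σ * B).trace := by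
  rw [Matrix.mul_add, trace_add, trace_mul_kronecker_one, trace_mul_one_kronecker]

lemma trace_conj_mul_of_commute {m : Type*} [Fintype m] [DecidableEq m] {V H : Matrix m m ℂ}
    (hV : V ∈ unitaryGroup m ℂ) (hVH : V * H = H * V) (X : Matrix m m ℂ) :
    (V * X * star V * H).trace = (X * H).trace := by
  have hHV : star V * H = H * star V := by
    calc star V * H = star V * (H * V) * star V := by
          rw [Matrix.mul_assoc, Matrix.mul_assoc, Unitary.mul_star_self_of_mem hV, Matrix.mul_one]
      _ = H * star V := by
          rw [← hVH, ← Matrix.mul_assoc, Unitary.star_mul_self_of_mem hV, Matrix.one_mul]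
  have hconj : V * X * star V * H = V * (X * H) * star V := by
    rw [Matrix.mul_assoc _ (star V), hHV]
    simp only [Matrix.mul_assoc]
  rw [hconj, trace_mul_comm, ← Matrix.mul_assoc, Unitary.star_mul_self_of_mem hV, Matrix.one_mul]

lemma isDensityMatrix_conj_kronecker {V : Matrix (n × a) (n × a) ℂ}
    (hV : V ∈ unitaryGroup (n × a) ℂ) {ρ : Matrix n n ℂ} {τ : Matrix a a ℂ}
    (hρ : IsDensityMatrix ρ) (hτ : IsDensityMatrix τ) :
    IsDensityMatrix (V * (ρ ⊗ₖ τ) * Vᴴ) := by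
  refine ⟨(hρ.1.kronecker hτ.1).mul_mul_conjTranspose_same V, ?_⟩
  rw [trace_mul_comm, ← Matrix.mul_assoc, ← star_eq_conjTranspose,
    Unitary.star_mul_self_of_mem hV, Matrix.one_mul, trace_kronecker, hρ.2, hτ.2, one_mul]

lemma trace_ptrace₂_mul_add_trace_ptrace₁_mul_of_commute {V : Matrix (n × a) (n × a) ℂ}
    (hV : V ∈ unitaryGroup (n × a) ℂ) {H : Matrix n n ℂ} {HA : Matrix a a ℂ}
    (hVH : V * (H ⊗ₖ (1 : Matrix a a ℂ) + (1 : Matrix n n ℂ) ⊗ₖ HA) =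
      (H ⊗ₖ (1 : Matrix a a ℂ) + (1 : Matrix n n ℂ) ⊗ₖ HA) * V)
    {ρ : Matrix n n ℂ} {τ : Matrix a a ℂ} (hρ : ρ.trace = 1) (hτ : τ.trace = 1) :
    (ptrace₂ (V * (ρ ⊗ₖ τ) * Vᴴ) * H).trace + (ptrace₁ (V * (ρ ⊗ₖ τ) * Vᴴ) * HA).trace =
      (ρ * H).trace + (τ * HA).trace := by
  have hproduct := trace_mul_kronecker_one_add_one_kronecker (ρ ⊗ₖ τ) H HA
  rw [ptrace₂_kronecker, ptrace₁_kronecker, hρ, hτ, one_smul, one_smul] at hproduct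
  rw [← trace_mul_kronecker_one_add_one_kronecker, ← star_eq_conjTranspose,
    trace_conj_mul_of_commute hV hVH, hproduct]

def thermalOp (β : ℝ) (HA : Matrix a a ℂ) (V : Matrix (n × a) (n × a) ℂ) (ρ : Matrix n n ℂ) :
    Matrix n n ℂ :=
  ptrace₂ (V * (ρ ⊗ₖ gibbs β HA) * Vᴴ)

variable [Nonempty a] {β : ℝ} {H : Matrix n n ℂ} {HA : Matrix a a ℂ} {V : Matrix (n × a) (n × a) ℂ}

lemma thermalOp_gibbs (hH : H.IsHermitian) (hHA : HA.IsHermitian)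
    (hV : V ∈ unitaryGroup (n × a) ℂ)
    (hVH : V * (H ⊗ₖ (1 : Matrix a a ℂ) + (1 : Matrix n n ℂ) ⊗ₖ HA) =
      (H ⊗ₖ (1 : Matrix a a ℂ) + (1 : Matrix n n ℂ) ⊗ₖ HA) * V) :
    thermalOp β HA V (gibbs β H) = gibbs β H := by
  set Htot := H ⊗ₖ (1 : Matrix a a ℂ) + (1 : Matrix n n ℂ) ⊗ₖ HA
  have hHtot : Htot.IsHermitian := by
    refine IsHermitian.add ?_ ?_ <;> simp [IsHermitian, conjTranspose_kronecker, hH.eq, hHA.eq]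
  have hVHV : V * Htot * star V = Htot := by
    rw [hVH, Matrix.mul_assoc, Unitary.mul_star_self_of_mem hV, Matrix.mul_one]
  rw [thermalOp, gibbs_kronecker β hH hHA, ← star_eq_conjTranspose, ← gibbs_conj β hV hHtot, hVHV,
    ← gibbs_kronecker β hH hHA, ptrace₂_kronecker, (isDensityMatrix_gibbs β hHA).2, one_smul]

lemma freeEnergy_thermalOp_le (hβ : 0 < β) (hHA : HA.IsHermitian)
    (hV : V ∈ unitaryGroup (n × a) ℂ)
    (hVH : V * (H ⊗ₖ (1 : Matrix a a ℂ) + (1 : Matrix n n ℂ) ⊗ₖ HA) =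
      (H ⊗ₖ (1 : Matrix a a ℂ) + (1 : Matrix n n ℂ) ⊗ₖ HA) * V)
    {ρ : Matrix n n ℂ} (hρ : IsDensityMatrix ρ) :
    freeEnergy (thermalOp β HA V ρ) H (1 / β) ≤ freeEnergy ρ H (1 / β) := by
  set τ := gibbs β HA
  set σ := V * (ρ ⊗ₖ τ) * Vᴴ
  have hτ : IsDensityMatrix τ := isDensityMatrix_gibbs β hHA
  have hσ : IsDensityMatrix σ := isDensityMatrix_conj_kronecker hV hρ hτ
  have henergy := congrArg Complex.re
    (trace_ptrace₂_mul_add_trace_ptrace₁_mul_of_commute hV hVH hρ.2 hτ.2)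
  rw [Complex.add_re, Complex.add_re] at henergy
  have hentropy : vnEntropy σ = vnEntropy ρ + vnEntropy τ := by
    rw [← vnEntropy_kronecker hρ.1.1 hτ.1.1 hρ.2 hτ.2, ← vnEntropy_conj hV (hρ.1.kronecker hτ.1).1,
      star_eq_conjTranspose]
  obtain ⟨c, hc⟩ := re_trace_mul_hermLog_gibbs β hHA
  have hτS : vnEntropy τ = β * (τ * HA).trace.re - c := by
    have := hc τ hτ.2
    rw [re_trace_mul_hermLog_self hτ.1.1] at this
    linarith
  have hklein := relEntropy_ptrace₂_kronecker_nonneg hσ hτ (posDef_gibbs β hHA)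
  rw [relEntropy_ptrace₂_kronecker hσ.1 (posDef_gibbs β hHA),
    hc _ ((trace_ptrace₁ σ).trans hσ.2)] at hklein
  have hwork : β * ((ptrace₂ σ * H).trace.re - (ρ * H).trace.re) ≤
      vnEntropy (ptrace₂ σ) - vnEntropy ρ := by
    have := congrArg (β * ·) henergy
    simp only [mul_add] at this
    linarith
  rw [freeEnergy, freeEnergy, thermalOp, one_div, ← div_eq_inv_mul, ← div_eq_inv_mul]
  have := (le_div_iff₀' hβ).mpr hwork
  rw [sub_div] at this
  linarith

end ThermalOperation

/-- The distillable work of a thermal channel is zero. -/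
theorem thermal_channel_distillableWork_zero
    {n a : Type*} [Fintype n] [DecidableEq n] [Nonempty n]
    [Fintype a] [DecidableEq a] [Nonempty a]
    (Hm : Matrix n n ℂ) (HA : Matrix a a ℂ)
    (hH : Hm.IsHermitian) (hHA : HA.IsHermitian)
    (β : ℝ) (hβ : 0 < β)
    (V : Matrix (n × a) (n × a) ℂ) (hV : V ∈ Matrix.unitaryGroup (n × a) ℂ)
    (hcomm : V * (Hm ⊗ₖ (1 : Matrix a a ℂ) + (1 : Matrix n n ℂ) ⊗ₖ HA) =
      (Hm ⊗ₖ (1 : Matrix a a ℂ) + (1 : Matrix n n ℂ) ⊗ₖ HA) * V)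
    (Φ : Matrix n n ℂ → Matrix n n ℂ)
    (hΦ : ∀ ρ, Φ ρ = ptrace₂ (V * (ρ ⊗ₖ gibbs β HA) * Vᴴ)) :
    distillableWork Φ Hm (1 / β) = 0 := by
  obtain rfl : Φ = thermalOp β HA V := funext hΦ
  have hfixed : deltaF (thermalOp β HA V) (gibbs β Hm) Hm (1 / β) = 0 := by
    rw [deltaF, thermalOp_gibbs hH hHA hV hcomm, sub_self]
  refine IsGreatest.csSup_eq ⟨⟨gibbs β Hm, isDensityMatrix_gibbs β hH, hfixed.symm⟩, ?_⟩
  rintro _ ⟨ρ, hρ, rfl⟩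
  exact sub_nonpos.mpr (freeEnergy_thermalOp_le hβ hHA hV hcomm hρ)

end
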